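/- arXiv:math/0610501 — 4 statements merged into one kernel-verified Lean document; each statement's English description precedes it below -/
import Mathlib

section
/- Let n be a positive integer and let M be an n²×n² matrix over 𝔽₂ such that every diagonal entry of M equals 1. Then there exists a finite set S of row indices such that the vector Σ_{i∈S} M_i (the sum over 𝔽₂ of the rows of M indexed by S) has Hamming weight at least n. -/
/-- Solving an upper-triangular system over `ZMod 2`: given a list of indices such that
`M s t = 0` whenever `s` comes before `t`, and all diagonal entries are `1`, some subset of
the rows indexed by the list sums to `1` at every column in the list. -/
lemma solve_tri {m : ℕ} (M : Matrix (Fin m) (Fin m) (ZMod 2))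
    (hdiag : ∀ i, M i i = 1) :
    ∀ l : List (Fin m), l.Pairwise (fun s t => M s t = 0) →
    ∃ S : Finset (Fin m), (∀ i ∈ S, i ∈ l) ∧ ∀ t ∈ l, (∑ i ∈ S, M i t) = 1 := by
  intro l hl
  induction l with
  | nil => exact ⟨∅, by simp, by simp⟩
  | cons a l ih =>
    obtain ⟨ha, hl'⟩ := List.pairwise_cons.mp hl
    obtain ⟨S, hSmem, hS⟩ := ih hl'
    have haS : a ∉ S := by
      intro h
      have := ha a (hSmem a h)
      rw [hdiag a] at this
      exact one_ne_zero this
    by_cases hv : (∑ i ∈ S, M i a) = 1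
    · refine ⟨S, fun i hi => List.mem_cons_of_mem _ (hSmem i hi), ?_⟩
      intro t ht
      rcases List.mem_cons.mp ht with rfl | ht
      · exact hv
      · exact hS t ht
    · have hv0 : (∑ i ∈ S, M i a) = 0 := by
        have h2 : ∀ x : ZMod 2, x = 0 ∨ x = 1 := by decide
        rcases h2 (∑ i ∈ S, M i a) with h | h
        · exact h
        · exact absurd h hv
      refine ⟨insert a S, ?_, ?_⟩
      · intro i hi
        rcases Finset.mem_insert.mp hi with rfl | hi
        · simp
        · exact List.mem_cons_of_mem _ (hSmem i hi)
      · intro t ht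
        rw [Finset.sum_insert haS]
        rcases List.mem_cons.mp ht with rfl | ht
        · rw [hdiag t, hv0, add_zero]
        · rw [ha t ht, zero_add]
          exact hS t ht

/-- Greedy extraction: if every row of `M` has at most `k` nonzero entries, then any set `A`
of indices contains a "triangular" list of length at least `A.card / k`. -/
lemma greedy {m k : ℕ} (M : Matrix (Fin m) (Fin m) (ZMod 2)) (hdiag : ∀ i, M i i = 1)
    (hsmall : ∀ i, (Finset.univ.filter (fun j => M i j ≠ 0)).card ≤ k) :
    ∀ A : Finset (Fin m), ∃ l : List (Fin m),
      l.Pairwise (fun s t => M s t = 0) ∧ (∀ j ∈ l, j ∈ A) ∧ A.card ≤ l.length * k := by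
  intro A
  induction A using Finset.strongInduction with
  | _ A ih =>
    rcases A.eq_empty_or_nonempty with rfl | ⟨i, hi⟩
    · exact ⟨[], List.Pairwise.nil, by simp, by simp⟩
    · set X := A.filter (fun j => M i j ≠ 0) with hX
      have hXA : X ⊆ A := Finset.filter_subset _ _
      have hiX : i ∈ X := by
        simp only [hX, Finset.mem_filter]
        exact ⟨hi, by rw [hdiag i]; exact one_ne_zero⟩
      have hsub : A \ X ⊂ A := Finset.sdiff_ssubset hXA ⟨i, hiX⟩
      obtain ⟨l, hl, hlA, hcard⟩ := ih (A \ X) hsub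
      refine ⟨i :: l, ?_, ?_, ?_⟩
      · refine List.pairwise_cons.mpr ⟨?_, hl⟩
        intro t ht
        have htA : t ∈ A \ X := hlA t ht
        have : t ∉ X := (Finset.mem_sdiff.mp htA).2
        by_contra h
        apply this
        simp only [hX, Finset.mem_filter]
        exact ⟨(Finset.mem_sdiff.mp htA).1, h⟩
      · intro j hj
        rcases List.mem_cons.mp hj with rfl | hj
        · exact hi
        · exact (Finset.mem_sdiff.mp (hlA j hj)).1
      · have h1 : A.card = (A \ X).card + X.card := by
          rw [Finset.card_sdiff_of_subset hXA]
          have := Finset.card_le_card hXA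
          omega
        have hXk : X.card ≤ k := le_trans (Finset.card_le_card
          (fun x hx => by
            simp only [hX, Finset.mem_filter] at hx
            simp [hx.2])) (hsmall i)
        have hcX : X.card ≤ A.card := Finset.card_le_card hXA
        simp only [List.length_cons]
        calc A.card = (A \ X).card + X.card := h1
          _ ≤ l.length * k + k := Nat.add_le_add hcard hXk
          _ = (l.length + 1) * k := by ring

/-- Let `n` be a positive integer and `M` an `n² × n²` matrix over `𝔽₂` whose diagonal
entries are all `1`. Then some sum of rows of `M` has Hamming weight at least `n`. -/
theorem stmt_0 (n : ℕ) (hn : 0 < n) (M : Matrix (Fin (n ^ 2)) (Fin (n ^ 2)) (ZMod 2))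
    (hdiag : ∀ i, M i i = 1) :
    ∃ S : Finset (Fin (n ^ 2)), n ≤ hammingNorm (fun j => ∑ i ∈ S, M i j) := by
  by_cases hbig : ∃ i, n ≤ (Finset.univ.filter (fun j => M i j ≠ 0)).card
  · obtain ⟨i, hi⟩ := hbig
    refine ⟨{i}, ?_⟩
    have : (fun j => ∑ x ∈ ({i} : Finset (Fin (n ^ 2))), M x j) = M i := by
      funext j; simp
    rw [this]
    simpa [hammingNorm] using hi
  · push_neg at hbig
    have hsmall : ∀ i, (Finset.univ.filter (fun j => M i j ≠ 0)).card ≤ n - 1 := by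
      intro i
      have := hbig i
      omega
    obtain ⟨l, hl, _, hcard⟩ := greedy M hdiag hsmall Finset.univ
    rw [Finset.card_univ, Fintype.card_fin] at hcard
    -- l.length ≥ n
    have hlen : n ≤ l.length := by
      by_contra h
      push_neg at h
      have h2 : l.length * (n - 1) ≤ (n - 1) * (n - 1) :=
        Nat.mul_le_mul_right _ (by omega)
      have h3 : n ^ 2 ≤ (n - 1) * (n - 1) := le_trans hcard h2
      obtain ⟨p, rfl⟩ : ∃ p, n = p + 1 := ⟨n - 1, by omega⟩
      simp only [Nat.add_sub_cancel] at h3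
      nlinarith [h3]
    obtain ⟨S, hSmem, hS⟩ := solve_tri M hdiag l hl
    refine ⟨S, ?_⟩
    have hnodup : l.Nodup := by
      refine hl.imp ?_ -- Pairwise Ne
      intro a b hab
      intro h
      subst h
      rw [hdiag a] at hab
      exact one_ne_zero hab
    have hsub : l.toFinset ⊆ Finset.univ.filter (fun j => (∑ i ∈ S, M i j) ≠ 0) := by
      intro t ht
      simp only [Finset.mem_filter, Finset.mem_univ, true_and]
      rw [hS t (List.mem_toFinset.mp ht)]
      exact one_ne_zero
    calc n ≤ l.length := hlen
      _ = l.toFinset.card := (List.toFinset_card_of_nodup hnodup).symm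
      _ ≤ _ := Finset.card_le_card hsub
end

section
/- Let n be a positive integer, let M be an n²×n² matrix over 𝔽₂ such that every diagonal entry of M equals 1, and let c be any vector in 𝔽₂^{n²}. Then there exists a (possibly empty) finite set S of row indices such that the vector c + Σ_{i∈S} M_i (sum over 𝔽₂, where M_i denotes the i-th row of M) has Hamming weight w satisfying 2w ≥ n. -/
/-! Average over all `x ∈ 𝔽₂^N`, i.e. over all sets `S` of rows. Translating `x` by the basis
vector `e_j` flips coordinate `j` of `c + x M`, since `M j j = 1`; so each coordinate is nonzero
for exactly half of the `x`, the average Hamming weight is `N / 2 = n² / 2`, and some `x`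
reaches it. -/

open Finset Matrix

theorem two_mul_card_filter_eq_card_of_perm {α : Type*} [Fintype α] {p : α → Prop}
    [DecidablePred p] (σ : Equiv.Perm α) (hσ : ∀ a, p (σ a) ↔ ¬ p a) :
    2 * #{a | p a} = Fintype.card α := by
  have hcard : #{a | ¬ p a} = #{a | p a} := card_equiv σ fun a => by simp [hσ]
  rw [two_mul]
  nth_rw 2 [← hcard]
  rw [card_filter_add_card_filter_not, card_univ]

theorem sum_hammingNorm_eq_sum_card {α ι : Type*} {β : ι → Type*} [Fintype α] [Fintype ι]
    [∀ j, Zero (β j)] [∀ j, DecidableEq (β j)] (v : α → ∀ j, β j) :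
    ∑ a, hammingNorm (v a) = ∑ j, #{a | v a j ≠ 0} :=
  sum_card_bipartiteAbove_eq_sum_card_bipartiteBelow (fun a j => v a j ≠ 0)

theorem exists_card_le_two_mul_hammingNorm {α ι : Type*} {β : ι → Type*} [Fintype α]
    [Nonempty α] [Fintype ι] [∀ j, Zero (β j)] [∀ j, DecidableEq (β j)] (v : α → ∀ j, β j)
    (hhalf : ∀ j, 2 * #{a | v a j ≠ 0} = Fintype.card α) :
    ∃ a, Fintype.card ι ≤ 2 * hammingNorm (v a) := by
  have htotal : ∑ a, 2 * hammingNorm (v a) = ∑ _a : α, Fintype.card ι := by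
    rw [← mul_sum, sum_hammingNorm_eq_sum_card, mul_sum]
    simp only [hhalf, sum_const, card_univ, smul_eq_mul, mul_comm]
  obtain ⟨a, -, ha⟩ := exists_le_of_sum_le univ_nonempty htotal.ge
  exact ⟨a, ha⟩

theorem two_mul_card_add_vecMul_ne_zero {ι : Type*} [Fintype ι] [DecidableEq ι]
    (M : Matrix ι ι (ZMod 2)) (hdiag : ∀ i, M i i = 1) (c : ι → ZMod 2) (j : ι) :
    2 * #{x : ι → ZMod 2 | (c + x ᵥ* M) j ≠ 0} = Fintype.card (ι → ZMod 2) := by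
  refine two_mul_card_filter_eq_card_of_perm (Equiv.addRight (Pi.single j 1)) fun x => ?_
  have htoggle : (c + (x + Pi.single j 1) ᵥ* M) j = (c + x ᵥ* M) j + 1 := by
    simp [add_vecMul, hdiag, add_assoc]
  simp only [Equiv.coe_addRight, htoggle]
  generalize (c + x ᵥ* M) j = y
  revert y; decide

theorem vecMul_apply_eq_sum_support {ι : Type*} [Fintype ι] (M : Matrix ι ι (ZMod 2))
    (x : ι → ZMod 2) (j : ι) : (x ᵥ* M) j = ∑ i ∈ {i | x i ≠ 0}, M i j := by
  rw [sum_filter, vecMul, dotProduct]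
  refine sum_congr rfl fun i _ => ?_
  by_cases hxi : x i = 0
  · simp [hxi]
  · simp [(by decide : ∀ y : ZMod 2, y ≠ 0 → y = 1) _ hxi]

theorem exists_card_le_two_mul_hammingNorm_add_sum_row {ι : Type*} [Fintype ι] [DecidableEq ι]
    (M : Matrix ι ι (ZMod 2)) (hdiag : ∀ i, M i i = 1) (c : ι → ZMod 2) :
    ∃ S : Finset ι, Fintype.card ι ≤ 2 * hammingNorm (fun j => c j + ∑ i ∈ S, M i j) := by
  obtain ⟨x, hx⟩ := exists_card_le_two_mul_hammingNorm (fun x : ι → ZMod 2 => c + x ᵥ* M)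
    (two_mul_card_add_vecMul_ne_zero M hdiag c)
  have hrows : c + x ᵥ* M = fun j => c j + ∑ i ∈ {i | x i ≠ 0}, M i j :=
    funext fun j => by rw [Pi.add_apply, vecMul_apply_eq_sum_support]
  exact ⟨_, hrows ▸ hx⟩

theorem stmt_1_general (n : ℕ) (M : Matrix (Fin (n ^ 2)) (Fin (n ^ 2)) (ZMod 2))
    (hdiag : ∀ i, M i i = 1) (c : Fin (n ^ 2) → ZMod 2) :
    ∃ S : Finset (Fin (n ^ 2)),
      n ≤ 2 * hammingNorm (fun j => c j + ∑ i ∈ S, M i j) := by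
  obtain ⟨S, hS⟩ := exists_card_le_two_mul_hammingNorm_add_sum_row M hdiag c
  rw [Fintype.card_fin] at hS
  exact ⟨S, (Nat.le_self_pow two_ne_zero n).trans hS⟩

/-- Let `n` be a positive integer, `M` an `n² × n²` matrix over `𝔽₂` whose diagonal
entries are all `1`, and `c` any vector in `𝔽₂^{n²}`. Then there is a (possibly empty)
set `S` of row indices such that `c + ∑_{i ∈ S} Mᵢ` has Hamming weight `w` with `2w ≥ n`. -/
theorem stmt_1 (n : ℕ) (hn : 0 < n) (M : Matrix (Fin (n ^ 2)) (Fin (n ^ 2)) (ZMod 2))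
    (hdiag : ∀ i, M i i = 1) (c : Fin (n ^ 2) → ZMod 2) :
    ∃ S : Finset (Fin (n ^ 2)),
      n ≤ 2 * hammingNorm (fun j => c j + ∑ i ∈ S, M i j) :=
  stmt_1_general n M hdiag c
end

section
/- Let λ and m be natural numbers, and for each α ∈ {1,…,m} let c_α : ℕ → ℤ be a function that is either (i) strictly increasing, or (ii) constant with |c_α(0)| > λ. Then there exists t with 0 ≤ t ≤ m(2λ+1) such that |c_α(t)| > λ for every α ∈ {1,…,m}. -/
/-! A strictly increasing integer sequence takes each of the `2λ + 1` values in `[-λ, λ]` at most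
once, and a constant one with `|c₀| > λ` never does; so each `c_α` is small at no more than
`2λ + 1` times, and the `m(2λ + 1) + 1` times `0, …, m(2λ + 1)` cannot all be covered. -/

open Finset

theorem Finset.card_filter_abs_le_le_of_injective {β : Type*} {f : β → ℤ}
    (hf : Function.Injective f) (s : Finset β) (lam : ℕ) :
    #{t ∈ s | |f t| ≤ lam} ≤ 2 * lam + 1 := by
  calc #{t ∈ s | |f t| ≤ lam}
      ≤ #(Icc (-(lam : ℤ)) lam) :=
        card_le_card_of_injOn f (fun t ht => mem_Icc.mpr (abs_le.mp (mem_filter.mp ht).2))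
          hf.injOn
    _ = 2 * lam + 1 := by rw [Int.card_Icc]; omega

theorem Finset.exists_mem_forall_not_of_card_filter_le {ι β : Type*} [Fintype ι]
    (s : Finset β) (P : ι → β → Prop) [∀ i, DecidablePred (P i)] (k : ℕ)
    (hP : ∀ i, #{t ∈ s | P i t} ≤ k) (hs : Fintype.card ι * k < #s) :
    ∃ t ∈ s, ∀ i, ¬ P i t := by
  classical
  by_contra! hcover
  have hsub : s ⊆ univ.biUnion fun i => {t ∈ s | P i t} := fun t ht => by
    obtain ⟨i, hi⟩ := hcover t ht
    exact mem_biUnion.mpr ⟨i, mem_univ i, mem_filter.mpr ⟨ht, hi⟩⟩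
  have := calc #s ≤ #(univ.biUnion fun i => {t ∈ s | P i t}) := card_le_card hsub
    _ ≤ ∑ i, #{t ∈ s | P i t} := card_biUnion_le
    _ ≤ ∑ _i : ι, k := sum_le_sum fun i _ => hP i
    _ = Fintype.card ι * k := by rw [sum_const, card_univ, smul_eq_mul]
  omega

/-- Let `λ, m` be natural numbers, and for each `α ∈ {1,…,m}` let `c_α : ℕ → ℤ` be a
function that is either (i) strictly increasing, or (ii) constant with `|c_α(0)| > λ`.
Then there is `t` with `0 ≤ t ≤ m(2λ+1)` such that `|c_α(t)| > λ` for every `α`. -/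
theorem stmt_8 (lam m : ℕ) (c : Fin m → ℕ → ℤ)
    (hc : ∀ α, StrictMono (c α) ∨ ((∀ s t : ℕ, c α s = c α t) ∧ (lam : ℤ) < |c α 0|)) :
    ∃ t ≤ m * (2 * lam + 1), ∀ α : Fin m, (lam : ℤ) < |c α t| := by
  have hsmall : ∀ α, #{t ∈ range (m * (2 * lam + 1) + 1) | |c α t| ≤ lam} ≤ 2 * lam + 1 := by
    intro α
    rcases hc α with hmono | ⟨hconst, hlarge⟩
    · exact card_filter_abs_le_le_of_injective hmono.injective _ lam
    · rw [filter_false_of_mem fun t _ => by rw [← hconst 0 t]; omega, card_empty]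
      omega
  obtain ⟨t, ht, hlarge⟩ := exists_mem_forall_not_of_card_filter_le _ _ _ hsmall
    (by rw [Fintype.card_fin, card_range]; omega)
  exact ⟨t, Nat.lt_succ_iff.mp (mem_range.mp ht), fun α => not_le.mp (hlarge α)⟩
end

section
/- Let n and λ be positive integers. Suppose for each h ∈ {1,…,n} and each k ∈ {0,…,n} we are given integers d(h,k,1), …, d(h,k,6), each satisfying d(h,k,j) ≥ λ, and integers L(h,0), L(h,1), …, L(h,n+1) satisfying L(h,k+1) = L(h,k) + Σ_{j=1}^{6} d(h,k,j) for each k ∈ {0,…,n}. Then there exists r with 0 ≤ r ≤ n such that for every h ∈ {1,…,n} and every choice of ε_1, ε_2, ε_3, ε_4 ∈ {0,1}, one has |L(h,r) + d(h,r,6) + Σ_{j=1}^{4} ε_j·d(h,r,j)| ≥ λ. -/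
lemma stmt_10_aux (f : ℕ → ℕ) (n : ℕ) (h : ∀ k ≤ n, f (k + 1) < f k) :
    ∀ m ≤ n + 1, m + f m ≤ f 0 := by
  intro m hm
  induction m with
  | zero => simp
  | succ k ih =>
    have h1 := ih (by omega)
    have h2 := h k (by omega)
    omega

/-- Let `n, λ` be positive integers. Suppose for each `h ∈ {1,…,n}` and `k ∈ {0,…,n}`
we are given integers `d(h,k,1), …, d(h,k,6)`, each `≥ λ`, and integers
`L(h,0), …, L(h,n+1)` with `L(h,k+1) = L(h,k) + Σ_{j=1}^{6} d(h,k,j)` for `k ∈ {0,…,n}`.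
Then there is `r` with `0 ≤ r ≤ n` such that for every `h` and every choice of
`ε_1, ε_2, ε_3, ε_4 ∈ {0,1}`, one has
`|L(h,r) + d(h,r,6) + Σ_{j=1}^{4} ε_j·d(h,r,j)| ≥ λ`. -/
theorem stmt_10 (n lam : ℕ) (hn : 0 < n) (hlam : 0 < lam)
    (d : Fin n → ℕ → Fin 6 → ℤ) (hd : ∀ h, ∀ k ≤ n, ∀ j, (lam : ℤ) ≤ d h k j)
    (L : Fin n → ℕ → ℤ)
    (hL : ∀ h, ∀ k ≤ n, L h (k + 1) = L h k + ∑ j : Fin 6, d h k j) :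
    ∃ r ≤ n, ∀ h : Fin n, ∀ ε : Fin 4 → ℤ, (∀ j, ε j = 0 ∨ ε j = 1) →
      (lam : ℤ) ≤
        |L h r + d h r 5 + ∑ j : Fin 4, ε j * d h r (j.castLE (by norm_num))| := by
  set S : ℕ → Finset (Fin n) := fun k => Finset.univ.filter (fun h => L h k < 0) with hS
  have hsub : ∀ k ≤ n, S (k + 1) ⊆ S k := by
    intro k hk h hh
    simp only [hS, Finset.mem_filter, Finset.mem_univ, true_and] at hh ⊢
    have heq := hL h k hk
    rw [Fin.sum_univ_six] at heq
    have h0 := hd h k hk 0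
    have h1 := hd h k hk 1
    have h2 := hd h k hk 2
    have h3 := hd h k hk 3
    have h4 := hd h k hk 4
    have h5 := hd h k hk 5
    have : (0:ℤ) < lam := by exact_mod_cast hlam
    linarith
  have hex : ∃ r ≤ n, S r = S (r + 1) := by
    by_contra hc
    push_neg at hc
    have hstrict : ∀ k ≤ n, (S (k + 1)).card < (S k).card := by
      intro k hk
      exact Finset.card_lt_card (lt_of_le_of_ne (hsub k hk) (fun e => hc k hk e.symm))
    have h1 := stmt_10_aux (fun k => (S k).card) n hstrict (n + 1) le_rfl
    have h2 : (S 0).card ≤ n := by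
      have := Finset.card_le_univ (S 0)
      simpa using this
    omega
  obtain ⟨r, hr, hSr⟩ := hex
  refine ⟨r, hr, ?_⟩
  intro h ε hε
  have hlamZ : (0:ℤ) < lam := by exact_mod_cast hlam
  have hd0 : ∀ j, (lam : ℤ) ≤ d h r j := fun j => hd h r hr j
  by_cases hL0 : 0 ≤ L h r
  · have hnn : 0 ≤ ∑ j : Fin 4, ε j * d h r (j.castLE (by norm_num)) := by
      apply Finset.sum_nonneg
      intro j _
      rcases hε j with e | e <;> simp [e]
      linarith [hd0 (j.castLE (by norm_num))]
    have : (lam : ℤ) ≤ L h r + d h r 5 + ∑ j : Fin 4, ε j * d h r (j.castLE (by norm_num)) := by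
      linarith [hd0 5]
    exact this.trans (le_abs_self _)
  · push_neg at hL0
    have hmem : h ∈ S r := by simp [hS, hL0]
    rw [hSr] at hmem
    have hL1 : L h (r + 1) < 0 := by
      simpa [hS] using hmem
    rw [hL h r hr, Fin.sum_univ_six] at hL1
    have hle : ∀ j : Fin 4, ε j * d h r (j.castLE (by norm_num)) ≤ d h r (j.castLE (by norm_num)) := by
      intro j
      rcases hε j with e | e <;> simp [e]
      linarith [hd0 (j.castLE (by norm_num))]
    have hsum4 : ∑ j : Fin 4, ε j * d h r (j.castLE (by norm_num)) ≤
        d h r 0 + d h r 1 + d h r 2 + d h r 3 := by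
      rw [Fin.sum_univ_four]
      exact add_le_add (add_le_add (add_le_add (hle 0) (hle 1)) (hle 2)) (hle 3)
    have hneg : L h r + d h r 5 + ∑ j : Fin 4, ε j * d h r (j.castLE (by norm_num)) ≤ -(lam:ℤ) := by
      linarith [hd0 4]
    have := neg_le_abs (L h r + d h r 5 + ∑ j : Fin 4, ε j * d h r (j.castLE (by norm_num)))
    linarith
end
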